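/- Fix natural numbers n and a. Then the number of ordered pairs (p, q) of sequences p, q : {1,...,n} → {+1, −1} (with no restriction on the number of +1 entries) such that Σ_{i=1}^n |P_i − Q_i| = 2a, where P_i and Q_i are the partial sums of p and q, equals the number of step words r : {1,...,n} → {U, D, O1, O2} (bilateral Motzkin prefixes, with no condition on the final height) such that Σ_{i=1}^n |H_i| = a, where H_i is the sum of the weights of the first i steps of r with weights w(U)=1, w(D)=−1, w(O1)=w(O2)=0. Moreover, the number of such pairs additionally satisfying P_i ≤ Q_i for all i equals the number of such step words additionally satisfying H_i ≥ 0 for all i. -/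

import Mathlib

/-!
Read the `j`-th entries of `p` and `q` together as one of four steps: `U` when only `q` goes up,
`D` when only `p` goes up, `O1`/`O2` when both go up/down. This is a bijection between pairs of
`±1`-sequences and step words, and under it the gap `Q_i - P_i` changes by `q_j - p_j = 2 w(r_j)`,
so `Q_i - P_i = 2 H_i`. Both conditions on the pairs thus become the corresponding conditions
on the words.
-/

/-- The four kinds of steps: up, down, and two colors of horizontal steps. -/
inductive Step where
  | U : Step
  | D : Step
  | O1 : Step
  | O2 : Step
deriving DecidableEq

instance instFintypeStep : Fintype Step :=
  ⟨{Step.U, Step.D, Step.O1, Step.O2}, fun x => by cases x <;> simp⟩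

/-- Weight of a step: U has weight 1, D has weight −1, O1 and O2 weight 0. -/
def Step.wt : Step → ℤ
  | .U => 1
  | .D => -1
  | .O1 => 0
  | .O2 => 0

/-- Height of a step word after its first `i` steps. -/
def stepHeight {n : ℕ} (r : Fin n → Step) (i : ℕ) : ℤ :=
  ∑ j ∈ Finset.univ.filter (fun j : Fin n => (j : ℕ) < i), (r j).wt

/-- Partial sum of a `±1`-sequence after its first `i` entries. -/
def partialSum {n : ℕ} (p : Fin n → ℤ) (i : ℕ) : ℤ :=
  ∑ j ∈ Finset.univ.filter (fun j : Fin n => (j : ℕ) < i), p j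

namespace Step

def lower : Step → ℤ
  | U => -1 | D => 1 | O1 => 1 | O2 => -1

def upper : Step → ℤ
  | U => 1 | D => -1 | O1 => 1 | O2 => -1

def ofSigns (x y : ℤ) : Step :=
  if x = 1 then (if y = 1 then O1 else D) else (if y = 1 then U else O2)

lemma lower_eq_one_or (s : Step) : s.lower = 1 ∨ s.lower = -1 := by
  cases s <;> simp [lower]

lemma upper_eq_one_or (s : Step) : s.upper = 1 ∨ s.upper = -1 := by
  cases s <;> simp [upper]

lemma ofSigns_lower_upper (s : Step) : ofSigns s.lower s.upper = s := by
  cases s <;> simp [ofSigns, lower, upper]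

lemma lower_ofSigns {x y : ℤ} (hx : x = 1 ∨ x = -1) (hy : y = 1 ∨ y = -1) :
    (ofSigns x y).lower = x := by
  rcases hx with rfl | rfl <;> rcases hy with rfl | rfl <;> simp [ofSigns, lower]

lemma upper_ofSigns {x y : ℤ} (hx : x = 1 ∨ x = -1) (hy : y = 1 ∨ y = -1) :
    (ofSigns x y).upper = y := by
  rcases hx with rfl | rfl <;> rcases hy with rfl | rfl <;> simp [ofSigns, upper]

lemma two_mul_wt (s : Step) : 2 * s.wt = s.upper - s.lower := by
  cases s <;> simp [wt, lower, upper]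

end Step

def signPairsEquivStepWords (n : ℕ) :
    {pq : (Fin n → ℤ) × (Fin n → ℤ) //
      (∀ i, pq.1 i = 1 ∨ pq.1 i = -1) ∧ (∀ i, pq.2 i = 1 ∨ pq.2 i = -1)} ≃ (Fin n → Step) where
  toFun pq j := Step.ofSigns (pq.1.1 j) (pq.1.2 j)
  invFun r := ⟨(fun j => (r j).lower, fun j => (r j).upper),
    fun j => (r j).lower_eq_one_or, fun j => (r j).upper_eq_one_or⟩
  left_inv := fun ⟨(p, q), hp, hq⟩ => by
    ext j
    · exact Step.lower_ofSigns (hp j) (hq j)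
    · exact Step.upper_ofSigns (hp j) (hq j)
  right_inv r := funext fun j => (r j).ofSigns_lower_upper

lemma natCard_signPairs_eq {n : ℕ} (C : (Fin n → ℤ) × (Fin n → ℤ) → Prop) :
    Nat.card {pq : (Fin n → ℤ) × (Fin n → ℤ) //
        (∀ i, pq.1 i = 1 ∨ pq.1 i = -1) ∧ (∀ i, pq.2 i = 1 ∨ pq.2 i = -1) ∧ C pq}
      = Nat.card {r : Fin n → Step // C (fun j => (r j).lower, fun j => (r j).upper)} := by
  refine Nat.card_congr ?_
  calc _ ≃ {pq : (Fin n → ℤ) × (Fin n → ℤ) //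
          ((∀ i, pq.1 i = 1 ∨ pq.1 i = -1) ∧ (∀ i, pq.2 i = 1 ∨ pq.2 i = -1)) ∧ C pq} :=
        Equiv.subtypeEquivRight fun _ => and_assoc.symm
    _ ≃ _ := (Equiv.subtypeSubtypeEquivSubtypeInter _ C).symm
    _ ≃ _ := ((signPairsEquivStepWords n).symm.subtypeEquiv fun _ => Iff.rfl).symm

lemma two_mul_stepHeight {n : ℕ} (r : Fin n → Step) (i : ℕ) :
    2 * stepHeight r i
      = partialSum (fun j => (r j).upper) i - partialSum (fun j => (r j).lower) i := by
  simp only [stepHeight, partialSum, Finset.mul_sum, ← Finset.sum_sub_distrib, Step.two_mul_wt]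

lemma abs_partialSum_lower_sub_upper {n : ℕ} (r : Fin n → Step) (i : ℕ) :
    |partialSum (fun j => (r j).lower) i - partialSum (fun j => (r j).upper) i|
      = 2 * |stepHeight r i| := by
  rw [abs_sub_comm, ← two_mul_stepHeight, abs_mul, abs_two]

lemma partialSum_lower_le_upper_iff {n : ℕ} (r : Fin n → Step) (i : ℕ) :
    partialSum (fun j => (r j).lower) i ≤ partialSum (fun j => (r j).upper) i
      ↔ 0 ≤ stepHeight r i := by
  rw [← sub_nonneg, ← two_mul_stepHeight]
  exact mul_nonneg_iff_of_pos_left two_pos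

lemma sum_abs_partialSum_lower_sub_upper_eq_iff {n : ℕ} (r : Fin n → Step) (a : ℤ) :
    ∑ i ∈ Finset.range n,
        |partialSum (fun j => (r j).lower) (i + 1) - partialSum (fun j => (r j).upper) (i + 1)|
          = 2 * a
      ↔ ∑ i ∈ Finset.range n, |stepHeight r (i + 1)| = a := by
  simp only [abs_partialSum_lower_sub_upper, ← Finset.mul_sum]
  exact mul_right_inj' two_ne_zero

/-- The bijection $A$ for prefixes: ordered pairs of $±1$-sequences of length
$n$ with $\sum_{i=1}^n |P_i - Q_i| = 2a$ are equinumerous with step words of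
length $n$ with $\sum_{i=1}^n |H_i| = a$; moreover the nested pairs
($P_i ≤ Q_i$ for all $i$) are equinumerous with the step words staying weakly
above the axis. -/
theorem card_pairs_eq_card_motzkinPrefixes (n a : ℕ) :
    (Nat.card {pq : (Fin n → ℤ) × (Fin n → ℤ) //
        (∀ i, pq.1 i = 1 ∨ pq.1 i = -1) ∧ (∀ i, pq.2 i = 1 ∨ pq.2 i = -1) ∧
        (∑ i ∈ Finset.range n, |partialSum pq.1 (i + 1) - partialSum pq.2 (i + 1)|)
          = 2 * (a : ℤ)}
      = Nat.card {r : Fin n → Step //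
        (∑ i ∈ Finset.range n, |stepHeight r (i + 1)|) = (a : ℤ)})
    ∧
    (Nat.card {pq : (Fin n → ℤ) × (Fin n → ℤ) //
        (∀ i, pq.1 i = 1 ∨ pq.1 i = -1) ∧ (∀ i, pq.2 i = 1 ∨ pq.2 i = -1) ∧
        (∀ i ∈ Finset.range n, partialSum pq.1 (i + 1) ≤ partialSum pq.2 (i + 1)) ∧
        (∑ i ∈ Finset.range n, |partialSum pq.1 (i + 1) - partialSum pq.2 (i + 1)|)
          = 2 * (a : ℤ)}
      = Nat.card {r : Fin n → Step //
        (∀ i ∈ Finset.range n, 0 ≤ stepHeight r (i + 1)) ∧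
        (∑ i ∈ Finset.range n, |stepHeight r (i + 1)|) = (a : ℤ)}) := by
  refine ⟨(natCard_signPairs_eq _).trans ?_, (natCard_signPairs_eq _).trans ?_⟩
  · simp only [sum_abs_partialSum_lower_sub_upper_eq_iff]
  · simp only [partialSum_lower_le_upper_iff, sum_abs_partialSum_lower_sub_upper_eq_iff]
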